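/- Let n be a positive integer and I = (Fin n → Fin 2). For every unit vector φ : I × I → ℂ (∑ x, ‖φ x‖² = 1), with ρ_φ x y = φ x * conj (φ y), one has ∑ over all pairs (A, B) with A B : Fin n → Fin 4 and B ≠ (fun _ => 0) of ‖⟪φ, ((P A) ⊗ₖ (P B)) φ⟫‖² ≤ 4^n − 1. Moreover there exists a unit vector φ attaining equality, namely any φ with ptr₂ ρ_φ = (2^n)⁻¹ • 1 (a maximally entangled state across the two halves). -/

import Mathlib

open Matrix BigOperators Kronecker

/-- The single-qubit Pauli matrices: σ₀ = 1, σ₁ = X, σ₂ = Y, σ₃ = Z. -/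
noncomputable def pauli : Fin 4 → Matrix (Fin 2) (Fin 2) ℂ :=
  ![1, !![0, 1; 1, 0], !![0, -Complex.I; Complex.I, 0], !![1, 0; 0, -1]]

/-- The Pauli string associated to `A : ι → Fin 4`. -/
noncomputable def pauliString {ι : Type*} [Fintype ι] (A : ι → Fin 4) :
    Matrix (ι → Fin 2) (ι → Fin 2) ℂ :=
  Matrix.of fun x y => ∏ i, pauli (A i) (x i) (y i)

/-- The quadratic form ⟪φ, M φ⟫ = ∑ x ∑ y, conj (φ x) · M x y · φ y. -/
noncomputable def qip {m : Type*} [Fintype m] (φ : m → ℂ) (M : Matrix m m ℂ) : ℂ :=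
  ∑ x, ∑ y, (starRingEnd ℂ) (φ x) * M x y * φ y

/-- Partial trace over the second tensor factor. -/
noncomputable def ptr2 {s t : Type*} [Fintype t] (M : Matrix (s × t) (s × t) ℂ) :
    Matrix s s ℂ :=
  Matrix.of fun i j => ∑ k, M (i, k) (j, k)

/-- The rank-one projection ρ_φ x y = φ x · conj (φ y) associated to a vector φ. -/
noncomputable def rankOne {m : Type*} (φ : m → ℂ) : Matrix m m ℂ :=
  Matrix.of fun x y => φ x * (starRingEnd ℂ) (φ y)

/-- The sum ∑_{A} ∑_{B ≠ 0} |⟪φ, (P A ⊗ P B) φ⟫|² over the Pauli sub-ensemble with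
nontrivial second half. -/
noncomputable def pauliSum (n : ℕ) (φ : (Fin n → Fin 2) × (Fin n → Fin 2) → ℂ) : ℝ :=
  ∑ A : Fin n → Fin 4,
    ∑ B ∈ Finset.univ.filter (fun B : Fin n → Fin 4 => B ≠ fun _ => (0 : Fin 4)),
      ‖qip φ (pauliString A ⊗ₖ pauliString B)‖ ^ 2

lemma pauli_conj (a : Fin 4) (x y : Fin 2) :
    (starRingEnd ℂ) (pauli a x y) = pauli a y x := by
  fin_cases a <;> fin_cases x <;> fin_cases y <;> simp [pauli, Matrix.one_apply]

lemma pauli_complete (x y z w : Fin 2) :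
    ∑ a : Fin 4, pauli a x y * pauli a z w =
      (if x = w then 1 else 0) * (if y = z then 1 else 0) * 2 := by
  fin_cases x <;> fin_cases y <;> fin_cases z <;> fin_cases w <;>
    simp [pauli, Fin.sum_univ_four, Matrix.one_apply, Complex.I_mul_I] <;> ring_nf

lemma pauliString_conj {ι : Type*} [Fintype ι] (A : ι → Fin 4) (x y : ι → Fin 2) :
    (starRingEnd ℂ) (pauliString A x y) = pauliString A y x := by
  simp [pauliString, map_prod, pauli_conj]

lemma pauliString_zero {ι : Type*} [Fintype ι] :
    pauliString (fun _ : ι => (0 : Fin 4)) = 1 := by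
  classical
  ext x y
  show (∏ i, pauli 0 (x i) (y i)) = _
  have : ∀ i, pauli 0 (x i) (y i) = if x i = y i then 1 else 0 := by
    intro i; simp [pauli, Matrix.one_apply]
  simp_rw [this, Finset.prod_boole, Matrix.one_apply, funext_iff]
  simp

lemma pauliString_complete {ι : Type*} [Fintype ι] [DecidableEq ι] (x y z w : ι → Fin 2) :
    ∑ A : ι → Fin 4, pauliString A x y * pauliString A z w =
      (if x = w then 1 else 0) * (if y = z then 1 else 0) * 2 ^ (Fintype.card ι) := by
  classical
  have h1 : ∀ A : ι → Fin 4, pauliString A x y * pauliString A z w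
      = ∏ i, (pauli (A i) (x i) (y i) * pauli (A i) (z i) (w i)) := by
    intro A; simp [pauliString, Finset.prod_mul_distrib]
  simp_rw [h1]
  rw [← Fintype.prod_sum (fun (i : ι) (a : Fin 4) => pauli a (x i) (y i) * pauli a (z i) (w i))]
  have h2 : ∀ i : ι, (∑ a : Fin 4, pauli a (x i) (y i) * pauli a (z i) (w i))
      = ((if x i = w i then 1 else 0) * (if y i = z i then 1 else 0)) * 2 :=
    fun i => by rw [pauli_complete]
  simp_rw [h2]
  rw [Finset.prod_mul_distrib, Finset.prod_const, Finset.prod_mul_distrib,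
    Finset.prod_boole, Finset.prod_boole, Finset.card_univ]
  simp [funext_iff]

lemma sum_pair {m : Type*} [Fintype m] (f : m → m → ℂ) :
    ∑ x, ∑ y, f x y = ∑ p : m × m, f p.1 p.2 :=
  (Fintype.sum_prod_type (f := fun p : m × m => f p.1 p.2)).symm

lemma parseval {m κ : Type*} [Fintype m] [Fintype κ] [DecidableEq m]
    (Q : κ → Matrix m m ℂ) (c : ℝ)
    (hconj : ∀ k x y, (starRingEnd ℂ) (Q k x y) = Q k y x)
    (hcomp : ∀ x y z w, ∑ k, Q k x y * Q k z w =
      (if x = w then 1 else 0) * (if y = z then 1 else 0) * (c : ℂ))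
    (M : Matrix m m ℂ) :
    ∑ k, ‖∑ x, ∑ y, Q k x y * M y x‖ ^ 2 = c * ∑ x, ∑ y, ‖M x y‖ ^ 2 := by
  classical
  have key : (∑ k, ((‖∑ x, ∑ y, Q k x y * M y x‖ : ℂ) ^ 2)) =
      (c : ℂ) * ∑ x, ∑ y, ((‖M x y‖ : ℂ) ^ 2) := by
    have hc : ∀ k : κ, ((‖∑ x, ∑ y, Q k x y * M y x‖ : ℂ) ^ 2) =
        ∑ p : m × m, ∑ q : m × m,
          (Q k p.2 p.1 * Q k q.1 q.2) * ((starRingEnd ℂ) (M p.2 p.1) * M q.2 q.1) := by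
      intro k
      rw [sum_pair (fun x y => Q k x y * M y x)]
      have h1 : ((‖∑ p : m × m, Q k p.1 p.2 * M p.2 p.1‖ : ℂ) ^ 2) =
          (starRingEnd ℂ) (∑ p : m × m, Q k p.1 p.2 * M p.2 p.1) *
            (∑ p : m × m, Q k p.1 p.2 * M p.2 p.1) := by
        rw [Complex.conj_mul']
      rw [h1, map_sum, Finset.sum_mul_sum]
      refine Finset.sum_congr rfl fun p _ => Finset.sum_congr rfl fun q _ => ?_
      rw [_root_.map_mul, hconj]
      ring
    simp_rw [hc]
    rw [Finset.sum_comm]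
    have h2 : ∀ p : m × m, (∑ k : κ, ∑ q : m × m,
        (Q k p.2 p.1 * Q k q.1 q.2) * ((starRingEnd ℂ) (M p.2 p.1) * M q.2 q.1)) =
        (c : ℂ) * ((‖M p.2 p.1‖ : ℂ) ^ 2) := by
      intro p
      rw [Finset.sum_comm]
      have h3 : ∀ q : m × m, (∑ k : κ, (Q k p.2 p.1 * Q k q.1 q.2) *
          ((starRingEnd ℂ) (M p.2 p.1) * M q.2 q.1)) =
          (if p = q then 1 else 0) * (c : ℂ) * ((starRingEnd ℂ) (M p.2 p.1) * M q.2 q.1) := by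
        intro q
        rw [← Finset.sum_mul, hcomp]
        congr 2
        by_cases h4 : p = q
        · subst h4; simp
        · rcases (not_and_or.mp (fun hh : p.2 = q.2 ∧ p.1 = q.1 => h4 (Prod.ext hh.2 hh.1)))
            with h5 | h5 <;> simp [h4, h5]
      simp_rw [h3]
      rw [Finset.sum_eq_single p]
      · rw [if_pos rfl, one_mul, Complex.conj_mul']
      · intro q _ hq
        rw [if_neg (fun h => hq h.symm)]
        ring
      · intro h; exact absurd (Finset.mem_univ p) h
    simp_rw [h2]
    rw [← Finset.mul_sum, sum_pair (fun x y => ((‖M x y‖ : ℂ) ^ 2))]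
    congr 1
    exact Fintype.sum_equiv (Equiv.prodComm m m) _ _ (fun p => rfl)
  have key2 : ((∑ k, ‖∑ x, ∑ y, Q k x y * M y x‖ ^ 2 : ℝ) : ℂ) =
      ((c * ∑ x, ∑ y, ‖M x y‖ ^ 2 : ℝ) : ℂ) := by
    push_cast
    exact key
  exact_mod_cast key2

lemma qip_eq {m : Type*} [Fintype m] (φ : m → ℂ) (M : Matrix m m ℂ) :
    qip φ M = ∑ x, ∑ y, M x y * rankOne φ y x := by
  unfold qip rankOne
  refine Finset.sum_congr rfl fun x _ => Finset.sum_congr rfl fun y _ => ?_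
  simp only [Matrix.of_apply]; ring

lemma qip_kron_one {I : Type*} [Fintype I] [DecidableEq I] (φ : I × I → ℂ)
    (P : Matrix I I ℂ) :
    qip φ (P ⊗ₖ (1 : Matrix I I ℂ)) = ∑ x, ∑ y, P x y * ptr2 (rankOne φ) y x := by
  rw [qip_eq]
  rw [Fintype.sum_prod_type]
  have h1 : ∀ x1 x2 : I, (∑ y : I × I, (P ⊗ₖ (1 : Matrix I I ℂ)) (x1, x2) y *
      rankOne φ y (x1, x2)) = ∑ y1, P x1 y1 * rankOne φ (y1, x2) (x1, x2) := by
    intro x1 x2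
    rw [Fintype.sum_prod_type]
    refine Finset.sum_congr rfl fun y1 _ => ?_
    simp [Matrix.kroneckerMap_apply, Matrix.one_apply, ite_mul, mul_ite]
  simp_rw [h1]
  refine Finset.sum_congr rfl fun x1 _ => ?_
  rw [Finset.sum_comm]
  refine Finset.sum_congr rfl fun y1 _ => ?_
  rw [← Finset.mul_sum]
  rfl

lemma rankOne_frob {m : Type*} [Fintype m] (φ : m → ℂ) :
    ∑ x, ∑ y, ‖rankOne φ x y‖ ^ 2 = (∑ x, ‖φ x‖ ^ 2) * (∑ x, ‖φ x‖ ^ 2) := by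
  rw [Finset.sum_mul_sum]
  refine Finset.sum_congr rfl fun x _ => Finset.sum_congr rfl fun y _ => ?_
  simp [rankOne, mul_pow, norm_mul]

lemma ite_pair {α β : Type*} [DecidableEq α] [DecidableEq β] (x w : α × β) :
    (if x = w then (1:ℂ) else 0) =
      (if x.1 = w.1 then 1 else 0) * (if x.2 = w.2 then 1 else 0) := by
  by_cases h1 : x.1 = w.1 <;> by_cases h2 : x.2 = w.2 <;> simp [Prod.ext_iff, h1, h2]

lemma pauliSum_eq (n : ℕ) (φ : (Fin n → Fin 2) × (Fin n → Fin 2) → ℂ)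
    (hφ : (∑ x, ‖φ x‖ ^ 2) = 1) :
    pauliSum n φ = 4 ^ n - (2:ℝ) ^ n * ∑ i, ∑ j, ‖ptr2 (rankOne φ) i j‖ ^ 2 := by
  classical
  have hcard : Fintype.card (Fin n → Fin 2) = 2 ^ n := by simp
  have htot : (∑ A : Fin n → Fin 4, ∑ B : Fin n → Fin 4,
      ‖qip φ (pauliString A ⊗ₖ pauliString B)‖ ^ 2) = 4 ^ n := by
    have hP := parseval (Q := fun k : (Fin n → Fin 4) × (Fin n → Fin 4) =>
        pauliString k.1 ⊗ₖ pauliString k.2) ((4:ℝ) ^ n)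
      (fun k x y => by
        simp only [Matrix.kroneckerMap_apply, _root_.map_mul, pauliString_conj])
      (fun x y z w => by
        rw [Fintype.sum_prod_type]
        have hAB : ∀ A B : Fin n → Fin 4,
            (pauliString A ⊗ₖ pauliString B) x y * (pauliString A ⊗ₖ pauliString B) z w
            = (pauliString A x.1 y.1 * pauliString A z.1 w.1) *
              (pauliString B x.2 y.2 * pauliString B z.2 w.2) := by
          intro A B
          show (pauliString A x.1 y.1 * pauliString B x.2 y.2) *
            (pauliString A z.1 w.1 * pauliString B z.2 w.2) = _
          ring
        simp_rw [hAB, ← Finset.mul_sum, ← Finset.sum_mul,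
          pauliString_complete, Fintype.card_fin]
        rw [ite_pair x w, ite_pair y z]
        have h4 : (((4:ℝ) ^ n : ℝ) : ℂ) = (2:ℂ) ^ n * (2:ℂ) ^ n := by
          push_cast
          rw [← mul_pow]; norm_num
        rw [h4]; ring)
      (rankOne φ)
    rw [Fintype.sum_prod_type] at hP
    simp_rw [← qip_eq] at hP
    rw [hP, rankOne_frob, hφ]; norm_num
  have hmarg : (∑ A : Fin n → Fin 4,
      ‖qip φ (pauliString A ⊗ₖ pauliString (fun _ : Fin n => (0 : Fin 4)))‖ ^ 2)
      = (2:ℝ) ^ n * ∑ i, ∑ j, ‖ptr2 (rankOne φ) i j‖ ^ 2 := by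
    have hP := parseval (Q := fun A : Fin n → Fin 4 => pauliString A) ((2:ℝ) ^ n)
      (fun A x y => pauliString_conj A x y)
      (fun x y z w => by rw [pauliString_complete, Fintype.card_fin]; push_cast; ring)
      (ptr2 (rankOne φ))
    rw [pauliString_zero]
    simp_rw [qip_kron_one]
    exact hP
  have hsplit : pauliSum n φ =
      (∑ A : Fin n → Fin 4, ∑ B : Fin n → Fin 4,
        ‖qip φ (pauliString A ⊗ₖ pauliString B)‖ ^ 2) -
      ∑ A : Fin n → Fin 4,
        ‖qip φ (pauliString A ⊗ₖ pauliString (fun _ : Fin n => (0 : Fin 4)))‖ ^ 2 := by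
    unfold pauliSum
    rw [← Finset.sum_sub_distrib]
    refine Finset.sum_congr rfl fun A _ => ?_
    rw [Finset.filter_ne', Finset.sum_erase_eq_sub (Finset.mem_univ _)]
  rw [hsplit, htot, hmarg]

/-- for every unit vector φ on 2n qubits,
∑_{A, B ≠ 0} |⟪φ, (P A ⊗ P B) φ⟫|² ≤ 4ⁿ − 1; equality holds for any unit φ whose second
marginal is maximally mixed, and such a (maximally entangled) unit vector exists. -/
theorem pauli_second_moment_bound_and_attained (n : ℕ) (hn : 0 < n) :
    (∀ φ : (Fin n → Fin 2) × (Fin n → Fin 2) → ℂ,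
        (∑ x, ‖φ x‖ ^ 2) = 1 → pauliSum n φ ≤ (4 : ℝ) ^ n - 1) ∧
    (∀ φ : (Fin n → Fin 2) × (Fin n → Fin 2) → ℂ,
        (∑ x, ‖φ x‖ ^ 2) = 1 →
        ptr2 (rankOne φ) = ((2 : ℂ) ^ n)⁻¹ • 1 →
        pauliSum n φ = (4 : ℝ) ^ n - 1) ∧
    (∃ φ : (Fin n → Fin 2) × (Fin n → Fin 2) → ℂ,
        (∑ x, ‖φ x‖ ^ 2) = 1 ∧ ptr2 (rankOne φ) = ((2 : ℂ) ^ n)⁻¹ • 1) := by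
  classical
  have hcard : Fintype.card (Fin n → Fin 2) = 2 ^ n := by simp
  refine ⟨?_, ?_, ?_⟩
  · -- bound
    intro φ hφ
    rw [pauliSum_eq n φ hφ]
    have hdiag : ∀ i : Fin n → Fin 2,
        ptr2 (rankOne φ) i i = ((∑ k, ‖φ (i, k)‖ ^ 2 : ℝ) : ℂ) := by
      intro i
      push_cast
      simp [ptr2, rankOne, Complex.mul_conj']
    have htr : (∑ i : Fin n → Fin 2, ∑ k : Fin n → Fin 2, ‖φ (i, k)‖ ^ 2) = 1 := by
      rw [← hφ, Fintype.sum_prod_type]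
    -- Cauchy–Schwarz: 1 ≤ 2^n * ∑ diag²
    have hCS : (1:ℝ) ≤ (2:ℝ) ^ n * ∑ i : Fin n → Fin 2, (∑ k, ‖φ (i, k)‖ ^ 2) ^ 2 := by
      have h := sq_sum_le_card_mul_sum_sq (s := (Finset.univ : Finset (Fin n → Fin 2)))
        (f := fun i => ∑ k, ‖φ (i, k)‖ ^ 2)
      rw [htr] at h
      simpa [Finset.card_univ, hcard] using h
    have hF : (1:ℝ) ≤ (2:ℝ) ^ n * ∑ i, ∑ j, ‖ptr2 (rankOne φ) i j‖ ^ 2 := by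
      refine hCS.trans (mul_le_mul_of_nonneg_left ?_ (by positivity))
      refine Finset.sum_le_sum fun i _ => ?_
      have hii : (∑ k, ‖φ (i, k)‖ ^ 2) ^ 2 = ‖ptr2 (rankOne φ) i i‖ ^ 2 := by
        rw [hdiag i, Complex.norm_real, Real.norm_of_nonneg (by positivity)]
      rw [hii]
      exact Finset.single_le_sum (f := fun j => ‖ptr2 (rankOne φ) i j‖ ^ 2)
        (fun j _ => by positivity) (Finset.mem_univ i)
    linarith
  · -- equality
    intro φ hφ hmix
    rw [pauliSum_eq n φ hφ, hmix]
    have hent : ∀ i j : Fin n → Fin 2,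
        ‖(((2:ℂ) ^ n)⁻¹ • (1 : Matrix (Fin n → Fin 2) (Fin n → Fin 2) ℂ)) i j‖ ^ 2
          = if i = j then ((2:ℝ) ^ n)⁻¹ ^ 2 else 0 := by
      intro i j
      by_cases h : i = j <;>
        simp [Matrix.smul_apply, Matrix.one_apply, h, norm_smul]
    simp_rw [hent]
    rw [Finset.sum_congr rfl (fun i _ => Finset.sum_ite_eq (Finset.univ) i
      (fun _ => ((2:ℝ) ^ n)⁻¹ ^ 2))]
    simp only [Finset.mem_univ, if_true, Finset.sum_const, Finset.card_univ, hcard,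
      nsmul_eq_mul]
    have h2 : (2:ℝ) ^ n ≠ 0 := by positivity
    push_cast
    field_simp
  · -- existence
    refine ⟨fun x => if x.1 = x.2 then ((Real.sqrt ((2:ℝ) ^ n))⁻¹ : ℂ) else 0, ?_, ?_⟩
    · have hnorm : ∀ x : (Fin n → Fin 2) × (Fin n → Fin 2),
          ‖(if x.1 = x.2 then ((Real.sqrt ((2:ℝ) ^ n))⁻¹ : ℂ) else 0)‖ ^ 2
            = if x.1 = x.2 then ((2:ℝ) ^ n)⁻¹ else 0 := by
        intro x
        by_cases h : x.1 = x.2 <;> simp [h, Complex.norm_real, abs_of_nonneg,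
          Real.sqrt_nonneg, ← Real.sqrt_inv, Real.sq_sqrt (by positivity : (0:ℝ) ≤ ((2:ℝ)^n)⁻¹)]
      simp_rw [hnorm]
      rw [Fintype.sum_prod_type]
      simp_rw [Finset.sum_ite_eq (Finset.univ)]
      simp [Finset.card_univ, hcard]
    · ext i j
      show (∑ k, (if i = k then ((Real.sqrt ((2:ℝ) ^ n))⁻¹ : ℂ) else 0) *
        (starRingEnd ℂ) (if j = k then ((Real.sqrt ((2:ℝ) ^ n))⁻¹ : ℂ) else 0)) = _
      have hc : (((Real.sqrt ((2:ℝ) ^ n) : ℝ) : ℂ))⁻¹ * (((Real.sqrt ((2:ℝ) ^ n) : ℝ) : ℂ))⁻¹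
          = ((2:ℂ) ^ n)⁻¹ := by
        norm_cast
        rw [← mul_inv, Real.mul_self_sqrt (by positivity)]
        push_cast
        ring
      by_cases h : i = j
      · subst h
        simp [Matrix.smul_apply, Matrix.one_apply, map_inv₀, Complex.conj_ofReal,
          ite_mul, mul_ite, Finset.sum_ite_eq, hc]
      · rw [Finset.sum_eq_zero ?_]
        · simp [Matrix.smul_apply, Matrix.one_apply, h]
        · intro k _
          rcases ne_or_eq i k with hik | hik
          · simp [hik]
          · subst hik
            have hj : ¬ j = i := fun hh => h hh.symm
            simp [hj]
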